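/- arXiv:2104.11895 — 3 statements merged into one kernel-verified Lean document; each statement's English description precedes it below -/
import Mathlib

section
/- Assume ℓ is convex, non-decreasing, differentiable with ℓ'(z) ≤ 1 for all z, and the dataset assumption holds. If there exists C > 0 such that for every k = 1,…,d−r+1, max_{u∈𝔹^d} |Σ_{i=1}^n ℓ'(−y_i f(x_i;θ*)) y_i (u^⊤(x_i⊙φ_k))_+| ≤ C, then Σ_{i=1}^n ℓ'(−y_i f(x_i;θ*)) ≤ (C + 2E)/γ. -/
/-!
Let `h = Σⱼ cⱼ (vⱼ⊤(x ⊙ φⱼ))₊` be the separating network and `gᵢ = ℓ'(-yᵢ f(xᵢ; θ*)) ∈ [0, 1]`.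
Swapping sums, `Σᵢ gᵢ yᵢ h(xᵢ) = Σⱼ cⱼ Σᵢ gᵢ yᵢ (vⱼ⊤(xᵢ ⊙ φⱼ))₊`; by periodicity each `φⱼ` is one
of `φ₀, …, φ_{d-r}`, so the flatness bound makes this at most `C Σⱼ |cⱼ| = C`. From below, each
point of margin at least `γ` contributes at least `γ gᵢ`, and each of the at most `E` others at
least `γ gᵢ - 2`, since `|gᵢ yᵢ h(xᵢ)| ≤ 1`.
-/

open scoped BigOperators
open MeasureTheory

noncomputable section

/-- Vectors in `ℝ^d` with the Euclidean norm. -/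
abbrev Vec (d : ℕ) := EuclideanSpace ℝ (Fin d)

/-- Hadamard (entrywise) product. -/
def nnHad {d : ℕ} (x φ : Vec d) : Vec d := WithLp.toLp 2 (fun i => x i * φ i)

/-- ReLU. -/
def nnRelu (z : ℝ) : ℝ := max z 0

/-- Euclidean dot product. -/
def nnDot {d : ℕ} (u v : Vec d) : ℝ := ∑ i, u i * v i

/-- Output of the two-layer ReLU network with masks `φ`. -/
def nnOut {d m : ℕ} (φ : ℕ → Vec d) (a : Fin m → ℝ) (w : Fin m → Vec d) (x : Vec d) : ℝ :=
  ∑ j, a j * nnRelu (nnDot (w j) (nnHad x (φ (j : ℕ))))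

/-- The regularized empirical loss `L_n(θ; λ)`. -/
def nnLoss {d m n : ℕ} (ℓ : ℝ → ℝ) (φ : ℕ → Vec d) (X : Fin n → Vec d) (Y : Fin n → ℝ)
    (lam : Fin m → ℝ) (θ : (Fin m → ℝ) × (Fin m → Vec d)) : ℝ :=
  (∑ i, ℓ (-(Y i) * nnOut φ θ.1 θ.2 (X i)))
    + (1 / 2) * ∑ j, lam j * ((θ.1 j) ^ 2 + ‖θ.2 j‖ ^ 2)

/-- The training (misclassification) error `R_n(θ; f)`. -/
def nnErr {d m n : ℕ} (φ : ℕ → Vec d) (X : Fin n → Vec d) (Y : Fin n → ℝ)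
    (θ : (Fin m → ℝ) × (Fin m → Vec d)) : ℝ :=
  (1 / (n : ℝ)) * ∑ i, if Y i = Real.sign (nnOut φ θ.1 θ.2 (X i)) then (0 : ℝ) else 1

/-- The masks are binary vectors. -/
def BinaryMasks {d : ℕ} (φ : ℕ → Vec d) : Prop := ∀ k i, φ k i = 0 ∨ φ k i = 1

/-- The mask sequence is periodic with period `p`. -/
def PeriodicMasks {d : ℕ} (φ : ℕ → Vec d) (p : ℕ) : Prop := ∀ k, φ (k + p) = φ k

/-- Assumption 1 on the loss: convex, non-decreasing, twice differentiable, `ℓ` and `ℓ'`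
are `1`-Lipschitz, and `ℓ'(z) ≤ exp (a z)` for a positive constant `a`. -/
def LossAssumption (ℓ ℓ' : ℝ → ℝ) (a : ℝ) : Prop :=
  ConvexOn ℝ Set.univ ℓ ∧ Monotone ℓ ∧ (∀ z, HasDerivAt ℓ (ℓ' z) z) ∧
  (∀ z, DifferentiableAt ℝ ℓ' z) ∧ LipschitzWith 1 ℓ ∧ LipschitzWith 1 ℓ' ∧
  0 < a ∧ ∀ z, ℓ' z ≤ Real.exp (a * z)

/-- Assumption 2 on the dataset: all data in the unit ball, and all but `E` points are
separated with margin `γ` by some network in the class `H_φ`. -/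
def DatasetAssumption {d n : ℕ} (φ : ℕ → Vec d) (X : Fin n → Vec d) (Y : Fin n → ℝ)
    (E γ : ℝ) : Prop :=
  (∀ i, ‖X i‖ ≤ 1) ∧
  ∃ (M : ℕ) (c : Fin M → ℝ) (v : Fin M → Vec d),
    1 ≤ M ∧ (∑ j, |c j|) = 1 ∧ (∀ j, ‖v j‖ = 1) ∧
    (n : ℝ) - E ≤
      ∑ i, (if γ ≤ Y i * ∑ j, c j * nnRelu (nnDot (v j) (nnHad (X i) (φ (j : ℕ)))) then (1 : ℝ)
        else 0)

lemma nnRelu_nonneg (z : ℝ) : 0 ≤ nnRelu z := le_max_right z 0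

lemma nnDot_le_norm_mul_norm {d : ℕ} (u w : Vec d) : nnDot u w ≤ ‖u‖ * ‖w‖ := by
  have h : nnDot u w = inner ℝ u w := by
    simp [nnDot, PiLp.inner_apply, RCLike.inner_apply, mul_comm]
  exact h ▸ real_inner_le_norm u w

lemma norm_nnHad_le {d : ℕ} (x φ : Vec d) (hφ : ∀ i, φ i = 0 ∨ φ i = 1) :
    ‖nnHad x φ‖ ≤ ‖x‖ := by
  rw [EuclideanSpace.norm_eq, EuclideanSpace.norm_eq]
  refine Real.sqrt_le_sqrt (Finset.sum_le_sum fun i _ => ?_)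
  rcases hφ i with h | h <;> simp [nnHad, h, sq_nonneg]

lemma nnRelu_nnDot_nnHad_le_one {d : ℕ} {v x φ : Vec d} (hv : ‖v‖ ≤ 1) (hx : ‖x‖ ≤ 1)
    (hφ : ∀ i, φ i = 0 ∨ φ i = 1) : nnRelu (nnDot v (nnHad x φ)) ≤ 1 := by
  refine max_le ?_ zero_le_one
  calc nnDot v (nnHad x φ) ≤ ‖v‖ * ‖nnHad x φ‖ := nnDot_le_norm_mul_norm _ _
    _ ≤ 1 * 1 := mul_le_mul hv ((norm_nnHad_le x φ hφ).trans hx) (norm_nonneg _) zero_le_one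
    _ = 1 := one_mul 1

lemma PeriodicMasks.eq_mod {d p : ℕ} {φ : ℕ → Vec d} (hper : PeriodicMasks φ p) (j : ℕ) :
    φ j = φ (j % p) :=
  (Function.Periodic.map_mod_nat hper j).symm

section FiniteSums

variable {ι κ : Type*} [Fintype ι] [Fintype κ]

lemma abs_sum_mul_le_sum_abs_mul (c a : κ → ℝ) {B : ℝ} (ha : ∀ j, |a j| ≤ B) :
    |∑ j, c j * a j| ≤ (∑ j, |c j|) * B := by
  calc |∑ j, c j * a j| ≤ ∑ j, |c j * a j| := Finset.abs_sum_le_sum_abs _ _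
    _ ≤ ∑ j, |c j| * B := Finset.sum_le_sum fun j _ => by
        rw [abs_mul]; exact mul_le_mul_of_nonneg_left (ha j) (abs_nonneg _)
    _ = (∑ j, |c j|) * B := (Finset.sum_mul _ _ _).symm

lemma abs_sum_mul_sum_le (w : ι → ℝ) (c : κ → ℝ) (F : ι → κ → ℝ) {C : ℝ}
    (hF : ∀ j, |∑ i, w i * F i j| ≤ C) :
    |∑ i, w i * ∑ j, c j * F i j| ≤ (∑ j, |c j|) * C := by
  have hswap : ∑ i, w i * ∑ j, c j * F i j = ∑ j, c j * ∑ i, w i * F i j := by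
    simp only [Finset.mul_sum]
    rw [Finset.sum_comm]
    exact Finset.sum_congr rfl fun j _ => Finset.sum_congr rfl fun i _ => by ring
  rw [hswap]
  exact abs_sum_mul_le_sum_abs_mul c _ hF

lemma margin_mul_sum_le {g s : ι → ℝ} {γ E : ℝ} (hγ : γ ≤ 1) (hg0 : ∀ i, 0 ≤ g i)
    (hg1 : ∀ i, g i ≤ 1) (hs : ∀ i, |s i| ≤ 1)
    (hmargin : (Fintype.card ι : ℝ) - E ≤ ∑ i, if γ ≤ s i then (1 : ℝ) else 0) :
    γ * ∑ i, g i ≤ ∑ i, g i * s i + 2 * E := by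
  have hpoint : ∀ i, γ * g i ≤ g i * s i + 2 * (1 - if γ ≤ s i then (1 : ℝ) else 0) := by
    intro i
    split_ifs with hi
    · nlinarith [hg0 i]
    · have hgs : |g i * s i| ≤ 1 := by
        rw [abs_mul, abs_of_nonneg (hg0 i)]
        nlinarith [hg1 i, hs i, abs_nonneg (s i), hg0 i]
      nlinarith [neg_abs_le (g i * s i), hg0 i, hg1 i]
  have hbad : ∑ i, (1 - if γ ≤ s i then (1 : ℝ) else 0) ≤ E := by
    rw [Finset.sum_sub_distrib, Finset.sum_const, Finset.card_univ, nsmul_eq_mul, mul_one]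
    linarith
  calc γ * ∑ i, g i = ∑ i, γ * g i := Finset.mul_sum _ _ _
    _ ≤ ∑ i, (g i * s i + 2 * (1 - if γ ≤ s i then (1 : ℝ) else 0)) :=
        Finset.sum_le_sum fun i _ => hpoint i
    _ ≤ ∑ i, g i * s i + 2 * E := by
        rw [Finset.sum_add_distrib, ← Finset.mul_sum]; linarith

end FiniteSums

theorem flat_directions_small_derivative_sum_general
    {d m n r : ℕ} (φ : ℕ → Vec d)
    (X : Fin n → Vec d) (Y : Fin n → ℝ)
    (ℓ ℓ' : ℝ → ℝ) (E γ C : ℝ)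
    (hmask : BinaryMasks φ) (hper : PeriodicMasks φ (d - r + 1))
    (hY : ∀ i, Y i = 1 ∨ Y i = -1)
    (hmono : Monotone ℓ)
    (hderiv : ∀ z, HasDerivAt ℓ (ℓ' z) z)
    (hbdd : ∀ z, ℓ' z ≤ 1)
    (hγ : 0 < γ ∧ γ ≤ 1)
    (hdata : DatasetAssumption φ X Y E γ)
    (θstar : (Fin m → ℝ) × (Fin m → Vec d))
    (hflat : ∀ k : ℕ, k < d - r + 1 → ∀ u : Vec d, ‖u‖ ≤ 1 →
      |∑ i, ℓ' (-(Y i) * nnOut φ θstar.1 θstar.2 (X i)) * Y i *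
          nnRelu (nnDot u (nnHad (X i) (φ k)))| ≤ C) :
    (∑ i, ℓ' (-(Y i) * nnOut φ θstar.1 θstar.2 (X i))) ≤ (C + 2 * E) / γ := by
  obtain ⟨hX, M, c, v, -, hc, hv, hmargin⟩ := hdata
  set g : Fin n → ℝ := fun i => ℓ' (-(Y i) * nnOut φ θstar.1 θstar.2 (X i))
  set h : Fin n → ℝ := fun i => ∑ j, c j * nnRelu (nnDot (v j) (nnHad (X i) (φ (j : ℕ))))
  have hℓ'0 : ∀ z, 0 ≤ ℓ' z := fun z => (hderiv z).deriv ▸ hmono.deriv_nonneg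
  have hg0 : ∀ i, 0 ≤ g i := fun i => hℓ'0 _
  have hh : ∀ i, |h i| ≤ 1 := fun i => by
    simpa [hc] using abs_sum_mul_le_sum_abs_mul c _ fun j =>
      (abs_of_nonneg (nnRelu_nonneg _)).trans_le
        (nnRelu_nnDot_nnHad_le_one (hv j).le (hX i) (hmask _))
  have hYh : ∀ i, |Y i * h i| ≤ 1 := fun i => by
    rcases hY i with hy | hy <;> simpa [hy] using hh i
  have hcorrelation : ∑ i, g i * (Y i * h i) ≤ C := by
    have := abs_sum_mul_sum_le (fun i => g i * Y i) c
      (fun i (j : Fin M) => nnRelu (nnDot (v j) (nnHad (X i) (φ (j : ℕ))))) fun j => by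
        simpa only [← hper.eq_mod] using
          hflat _ (Nat.mod_lt _ (Nat.succ_pos _)) (v j) (hv j).le
    rw [hc, one_mul] at this
    simpa only [mul_assoc] using (le_abs_self _).trans this
  have hlower := margin_mul_sum_le (s := fun i => Y i * h i) hγ.2 hg0 (fun i => hbdd _) hYh
    (by simpa only [Fintype.card_fin, mul_comm] using hmargin)
  rw [le_div_iff₀ hγ.1]
  linarith

theorem flat_directions_small_derivative_sum
    {d m n r : ℕ} (φ : ℕ → Vec d)
    (X : Fin n → Vec d) (Y : Fin n → ℝ)
    (ℓ ℓ' : ℝ → ℝ) (E γ C : ℝ)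
    (hr : 1 ≤ r) (hrd : r ≤ d)
    (hmask : BinaryMasks φ) (hper : PeriodicMasks φ (d - r + 1))
    (hY : ∀ i, Y i = 1 ∨ Y i = -1)
    (hconv : ConvexOn ℝ Set.univ ℓ)
    (hmono : Monotone ℓ)
    (hderiv : ∀ z, HasDerivAt ℓ (ℓ' z) z)
    (hbdd : ∀ z, ℓ' z ≤ 1)
    (hE : 0 ≤ E ∧ E ≤ n) (hγ : 0 < γ ∧ γ ≤ 1)
    (hdata : DatasetAssumption φ X Y E γ)
    (hC : 0 < C)
    (θstar : (Fin m → ℝ) × (Fin m → Vec d))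
    (hflat : ∀ k : ℕ, k < d - r + 1 → ∀ u : Vec d, ‖u‖ ≤ 1 →
      |∑ i, ℓ' (-(Y i) * nnOut φ θstar.1 θstar.2 (X i)) * Y i *
          nnRelu (nnDot u (nnHad (X i) (φ k)))| ≤ C) :
    (∑ i, ℓ' (-(Y i) * nnOut φ θstar.1 θstar.2 (X i))) ≤ (C + 2 * E) / γ :=
  flat_directions_small_derivative_sum_general φ X Y ℓ ℓ' E γ C hmask hper hY hmono hderiv hbdd hγ
    hdata θstar hflat
end
end

section
/- Let ℓ : ℝ → ℝ be differentiable and let θ* be a local minimum of the regularized empirical loss L_n(·;λ). Write ℓ'_i = ℓ'(−y_i f(x_i;θ*)) and I_j = {i ∈ [n] : w_j*^⊤(x_i⊙φ_j) = 0}. Then for every j ∈ [m], the vector λ_j w_j* − Σ_{i=1}^n ℓ'_i y_i a_j* 1{w_j*^⊤(x_i⊙φ_j) > 0} (x_i⊙φ_j) belongs to the set { Σ_{i∈I_j} μ_i ℓ'_i y_i a_j* (x_i⊙φ_j) : μ_i ∈ [0,1] for all i ∈ I_j }. -/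
open scoped BigOperators
open MeasureTheory

noncomputable section

/-! Perturbing only `w_j`, along a direction `u`, the loss has a right derivative at the minimum
(ReLU has one-sided derivatives), which must be nonnegative. With `bᵢ = ℓ'ᵢ yᵢ a_j` and
`zᵢ = xᵢ ⊙ φ_j`, this says that `v = λ_j w_j - ∑_{⟪w_j, zᵢ⟫ > 0} bᵢ zᵢ` satisfies
`⟪v, u⟫ ≥ ∑_{i ∈ I_j} min (bᵢ ⟪zᵢ, u⟫) 0` for every `u`. The right-hand side is the minimum of
`⟪·, u⟫` over the zonotope `Z = {∑_{i ∈ I_j} μᵢ bᵢ zᵢ : μ ∈ [0,1]^{I_j}}`; as `Z` is compact and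
convex, Hahn–Banach separation gives `v ∈ Z`. -/

open Set Filter Topology
open scoped RealInnerProductSpace

theorem nnDot_eq_inner {d : ℕ} (u v : Vec d) : nnDot u v = ⟪u, v⟫ := by
  simp [nnDot, PiLp.inner_apply, mul_comm]

theorem nnDot_add_smul_left {d : ℕ} (w v x : Vec d) (t : ℝ) :
    nnDot (w + t • v) x = nnDot w x + t * nnDot v x := by
  simp [nnDot_eq_inner, inner_add_left, inner_smul_left]

def reluRightDeriv (p s : ℝ) : ℝ := if 0 < p then s else if p = 0 then max s 0 else 0

theorem reluRightDeriv_zero_right (p : ℝ) : reluRightDeriv p 0 = 0 := by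
  simp [reluRightDeriv]

theorem hasDerivWithinAt_nnRelu_add_mul (p s : ℝ) :
    HasDerivWithinAt (fun t => nnRelu (p + t * s)) (reluRightDeriv p s) (Ici 0) 0 := by
  have hline : HasDerivAt (fun t : ℝ => p + t * s) s 0 := by
    simpa using ((hasDerivAt_id (0 : ℝ)).mul_const s).const_add p
  have hcont : Tendsto (fun t : ℝ => p + t * s) (𝓝 0) (𝓝 p) := by
    simpa using hline.continuousAt.tendsto
  rcases lt_trichotomy p 0 with hp | rfl | hp
  · refine (hasDerivAt_const (0 : ℝ) (0 : ℝ)).hasDerivWithinAt.congr_of_eventuallyEq_of_mem ?_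
      self_mem_Ici |>.congr_deriv (by simp [reluRightDeriv, hp.ne, hp.not_gt])
    filter_upwards [nhdsWithin_le_nhds (hcont.eventually (eventually_lt_nhds hp))] with t ht
    exact max_eq_right ht.le
  · refine ((hasDerivAt_id (0 : ℝ)).mul_const (max s 0)).hasDerivWithinAt.congr (fun t ht => ?_)
      (by simp [nnRelu]) |>.congr_deriv (by simp [reluRightDeriv])
    simp [nnRelu, mul_max_of_nonneg _ _ (mem_Ici.mp ht)]
  · refine hline.hasDerivWithinAt.congr_of_eventuallyEq_of_mem ?_ self_mem_Ici
      |>.congr_deriv (by simp [reluRightDeriv, hp])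
    filter_upwards [nhdsWithin_le_nhds (hcont.eventually (eventually_gt_nhds hp))] with t ht
    exact max_eq_left ht.le

theorem IsLocalMin.hasDerivWithinAt_Ici_nonneg {f : ℝ → ℝ} {a f' : ℝ} (h : IsLocalMin f a)
    (hf : HasDerivWithinAt f f' (Ici a) a) : 0 ≤ f' := by
  have hcone : (1 : ℝ) ∈ posTangentConeAt (Ici a) a :=
    mem_posTangentConeAt_of_segment_subset (by
      rw [segment_eq_Icc (by linarith)]; exact Icc_subset_Ici_self)
  simpa using (h.on (Ici a)).hasFDerivWithinAt_nonneg hf.hasFDerivWithinAt hcone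

theorem exists_mem_Icc_eq_sum_smul_of_forall_sum_min_le {E ι : Type*} [NormedAddCommGroup E]
    [InnerProductSpace ℝ E] [CompleteSpace E] [Fintype ι] (z : ι → E) (v : E)
    (h : ∀ u, ∑ i, min ⟪z i, u⟫ 0 ≤ ⟪v, u⟫) :
    ∃ μ : ι → ℝ, (∀ i, μ i ∈ Icc 0 1) ∧ v = ∑ i, μ i • z i := by
  set T := Fintype.linearCombination ℝ z
  suffices hv : v ∈ T '' Icc 0 1 by
    obtain ⟨μ, hμ, rfl⟩ := hv
    exact ⟨μ, fun i => ⟨hμ.1 i, hμ.2 i⟩, Fintype.linearCombination_apply ℝ z μ⟩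
  by_contra hv
  have hclosed : IsClosed (T '' Icc 0 1) :=
    (isCompact_Icc.image T.continuous_of_finiteDimensional).isClosed
  obtain ⟨f, c, hfv, hfT⟩ :=
    geometric_hahn_banach_point_closed ((convex_Icc 0 1).linear_image T) hclosed hv
  set u := (InnerProductSpace.toDual ℝ E).symm f
  have hf : ∀ x, f x = ⟪x, u⟫ := fun x => by
    rw [real_inner_comm, InnerProductSpace.toDual_symm_apply]
  -- the vertex of the cube at which `μ ↦ ⟪T μ, u⟫` is minimal
  let μ : ι → ℝ := fun i => if ⟪z i, u⟫ < 0 then 1 else 0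
  have hμ : μ ∈ Icc 0 1 := ⟨fun i => by unfold μ; split_ifs <;> norm_num,
    fun i => by unfold μ; split_ifs <;> norm_num⟩
  have hTμ : f (T μ) = ∑ i, min ⟪z i, u⟫ 0 := by
    rw [hf, Fintype.linearCombination_apply, sum_inner]
    refine Finset.sum_congr rfl fun i _ => ?_
    unfold μ
    split_ifs with hi
    · simp [hi.le]
    · simp [le_of_not_gt hi]
  have := hfT _ ⟨μ, hμ, rfl⟩
  rw [hTμ] at this
  linarith [h u, hf v]

theorem exists_mem_Icc_of_sum_reluRightDeriv_le {E ι : Type*} [NormedAddCommGroup E]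
    [InnerProductSpace ℝ E] [CompleteSpace E] [Fintype ι] (z : ι → E) (b : ι → ℝ) (c : ℝ) (w : E)
    (h : ∀ u, ∑ i, b i * reluRightDeriv ⟪w, z i⟫ ⟪u, z i⟫ ≤ c * ⟪w, u⟫) :
    ∃ μ : ι → ℝ, (∀ i, μ i ∈ Icc 0 1) ∧
      c • w - ∑ i, (b i * if 0 < ⟪w, z i⟫ then 1 else 0) • z i
        = ∑ i, ((if ⟪w, z i⟫ = 0 then μ i else 0) * b i) • z i := by
  have hpoint : ∀ p s b : ℝ, min (if p = 0 then b * s else 0) 0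
      ≤ b * reluRightDeriv p s - (b * if 0 < p then 1 else 0) * s := by
    intro p s b
    rcases lt_trichotomy p 0 with hp | rfl | hp
    · simp [reluRightDeriv, hp.ne, hp.not_gt]
    · rcases le_total s 0 with hs | hs <;> simp [reluRightDeriv, hs]
    · simp [reluRightDeriv, hp, hp.ne']
  obtain ⟨μ, hμ, hv⟩ := exists_mem_Icc_eq_sum_smul_of_forall_sum_min_le
    (fun i => if ⟪w, z i⟫ = 0 then b i • z i else 0)
    (c • w - ∑ i, (b i * if 0 < ⟪w, z i⟫ then 1 else 0) • z i) fun u => by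
      rw [inner_sub_left, real_inner_smul_left, sum_inner]
      refine le_trans ?_ (sub_le_sub_right (h u) _)
      rw [← Finset.sum_sub_distrib]
      refine Finset.sum_le_sum fun i _ => ?_
      have hz : ⟪if ⟪w, z i⟫ = 0 then b i • z i else 0, u⟫
          = if ⟪w, z i⟫ = 0 then b i * ⟪u, z i⟫ else 0 := by
        split_ifs
        · rw [real_inner_smul_left, real_inner_comm]
        · exact inner_zero_left u
      rw [hz, real_inner_smul_left, real_inner_comm u (z i)]
      exact hpoint _ _ _
  refine ⟨μ, hμ, hv.trans (Finset.sum_congr rfl fun i _ => ?_)⟩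
  split_ifs <;> simp [smul_smul]

theorem hasDerivWithinAt_nnOut {d m : ℕ} (φ : ℕ → Vec d) (a : Fin m → ℝ) (w v : Fin m → Vec d)
    (x : Vec d) :
    HasDerivWithinAt (fun t : ℝ => nnOut φ a (w + t • v) x)
      (∑ k, a k * reluRightDeriv (nnDot (w k) (nnHad x (φ k))) (nnDot (v k) (nnHad x (φ k))))
      (Ici 0) 0 := by
  simp only [nnOut, Pi.add_apply, Pi.smul_apply, nnDot_add_smul_left]
  exact HasDerivWithinAt.fun_sum fun k _ => (hasDerivWithinAt_nnRelu_add_mul _ _).const_mul (a k)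

theorem hasDerivWithinAt_nnLoss {d m n : ℕ} (ℓ ℓ' : ℝ → ℝ)
    (hderiv : ∀ z, HasDerivAt ℓ (ℓ' z) z) (φ : ℕ → Vec d) (X : Fin n → Vec d) (Y : Fin n → ℝ)
    (lam : Fin m → ℝ) (θ : (Fin m → ℝ) × (Fin m → Vec d)) (v : Fin m → Vec d) :
    HasDerivWithinAt (fun t : ℝ => nnLoss ℓ φ X Y lam (θ.1, θ.2 + t • v))
      ((∑ i, ℓ' (-(Y i) * nnOut φ θ.1 θ.2 (X i)) * (-(Y i) * ∑ k, θ.1 k *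
          reluRightDeriv (nnDot (θ.2 k) (nnHad (X i) (φ k))) (nnDot (v k) (nnHad (X i) (φ k)))))
        + ∑ k, lam k * ⟪θ.2 k, v k⟫) (Ici 0) 0 := by
  have hdata : HasDerivWithinAt (fun t : ℝ => ∑ i, ℓ (-(Y i) * nnOut φ θ.1 (θ.2 + t • v) (X i)))
      (∑ i, ℓ' (-(Y i) * nnOut φ θ.1 θ.2 (X i)) * (-(Y i) * ∑ k, θ.1 k *
          reluRightDeriv (nnDot (θ.2 k) (nnHad (X i) (φ k))) (nnDot (v k) (nnHad (X i) (φ k)))))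
      (Ici 0) 0 := by
    refine HasDerivWithinAt.fun_sum fun i _ => ?_
    refine HasDerivAt.comp_hasDerivWithinAt (h := fun t : ℝ => -(Y i) *
      nnOut φ θ.1 (θ.2 + t • v) (X i)) 0 ?_ ((hasDerivWithinAt_nnOut _ _ _ _ _).const_mul _)
    simpa using hderiv (-(Y i) * nnOut φ θ.1 θ.2 (X i))
  have hreg : HasDerivAt (fun t : ℝ => 1 / 2 * ∑ k, lam k * (θ.1 k ^ 2 + ‖(θ.2 + t • v) k‖ ^ 2))
      (∑ k, lam k * ⟪θ.2 k, v k⟫) 0 := by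
    have hnorm : ∀ k, HasDerivAt (fun t : ℝ => ‖θ.2 k + t • v k‖ ^ 2) (2 * ⟪θ.2 k, v k⟫) 0 :=
      fun k => by simpa using (((hasDerivAt_id (0 : ℝ)).smul_const (v k)).const_add (θ.2 k)).norm_sq
    simp only [Pi.add_apply, Pi.smul_apply]
    refine (HasDerivAt.fun_sum fun k _ => ((hnorm k).const_add (θ.1 k ^ 2)).const_mul (lam k))
      |>.const_mul (1 / 2) |>.congr_deriv ?_
    rw [Finset.mul_sum]
    exact Finset.sum_congr rfl fun k _ => by ring
  exact hdata.add hreg.hasDerivWithinAt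

theorem IsLocalMin.sum_reluRightDeriv_le {d m n : ℕ} {ℓ ℓ' : ℝ → ℝ}
    (hderiv : ∀ z, HasDerivAt ℓ (ℓ' z) z) {φ : ℕ → Vec d} {X : Fin n → Vec d} {Y : Fin n → ℝ}
    {lam : Fin m → ℝ} {θ : (Fin m → ℝ) × (Fin m → Vec d)}
    (hmin : IsLocalMin (nnLoss ℓ φ X Y lam) θ) (j : Fin m) (u : Vec d) :
    ∑ i, ℓ' (-(Y i) * nnOut φ θ.1 θ.2 (X i)) * Y i * θ.1 j *
        reluRightDeriv (nnDot (θ.2 j) (nnHad (X i) (φ j))) (nnDot u (nnHad (X i) (φ j)))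
      ≤ lam j * ⟪θ.2 j, u⟫ := by
  set v : Fin m → Vec d := Pi.single j u
  have hray : IsLocalMin (fun t : ℝ => nnLoss ℓ φ X Y lam (θ.1, θ.2 + t • v)) 0 :=
    IsLocalMin.comp_continuous (f := nnLoss ℓ φ X Y lam) (g := fun t : ℝ => (θ.1, θ.2 + t • v))
      (b := 0) (by simpa using hmin) (by fun_prop)
  have hslope :=
    hray.hasDerivWithinAt_Ici_nonneg (hasDerivWithinAt_nnLoss ℓ ℓ' hderiv φ X Y lam θ v)
  have hout : ∀ i, ∑ k, θ.1 k * reluRightDeriv (nnDot (θ.2 k) (nnHad (X i) (φ k)))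
      (nnDot (v k) (nnHad (X i) (φ k)))
      = θ.1 j * reluRightDeriv (nnDot (θ.2 j) (nnHad (X i) (φ j))) (nnDot u (nnHad (X i) (φ j))) :=
    fun i => by
    rw [Finset.sum_eq_single j (fun k _ hk => by simp [v, hk, nnDot, reluRightDeriv_zero_right])
      (by simp)]
    simp [v]
  have hreg : ∑ k, lam k * ⟪θ.2 k, v k⟫ = lam j * ⟪θ.2 j, u⟫ := by
    rw [Finset.sum_eq_single j (fun k _ hk => by simp [v, hk]) (by simp)]
    simp [v]
  simp only [hout, hreg] at hslope
  have hdata : ∑ i, ℓ' (-(Y i) * nnOut φ θ.1 θ.2 (X i)) * (-(Y i) * (θ.1 j *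
      reluRightDeriv (nnDot (θ.2 j) (nnHad (X i) (φ j))) (nnDot u (nnHad (X i) (φ j)))))
      = -∑ i, ℓ' (-(Y i) * nnOut φ θ.1 θ.2 (X i)) * Y i * θ.1 j *
        reluRightDeriv (nnDot (θ.2 j) (nnHad (X i) (φ j))) (nnDot u (nnHad (X i) (φ j))) := by
    rw [← Finset.sum_neg_distrib]
    exact Finset.sum_congr rfl fun i _ => by ring
  linarith

theorem local_min_first_order_condition_general
    {d m n : ℕ} (φ : ℕ → Vec d)
    (X : Fin n → Vec d) (Y : Fin n → ℝ)
    (ℓ ℓ' : ℝ → ℝ) (hderiv : ∀ z, HasDerivAt ℓ (ℓ' z) z)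
    (lam : Fin m → ℝ)
    (θstar : (Fin m → ℝ) × (Fin m → Vec d))
    (hmin : IsLocalMin (nnLoss ℓ φ X Y lam) θstar) :
    ∀ j : Fin m, ∃ μ : Fin n → ℝ, (∀ i, μ i ∈ Set.Icc (0 : ℝ) 1) ∧
      (lam j • θstar.2 j
          - ∑ i, (ℓ' (-(Y i) * nnOut φ θstar.1 θstar.2 (X i)) * Y i * θstar.1 j *
              (if 0 < nnDot (θstar.2 j) (nnHad (X i) (φ (j : ℕ))) then (1 : ℝ) else 0)) •
            nnHad (X i) (φ (j : ℕ)))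
        = ∑ i, ((if nnDot (θstar.2 j) (nnHad (X i) (φ (j : ℕ))) = 0 then μ i else 0) *
            ℓ' (-(Y i) * nnOut φ θstar.1 θstar.2 (X i)) * Y i * θstar.1 j) •
            nnHad (X i) (φ (j : ℕ)) := by
  intro j
  have hdir := hmin.sum_reluRightDeriv_le hderiv j
  simp only [nnDot_eq_inner] at hdir ⊢
  obtain ⟨μ, hμ, hsubgrad⟩ := exists_mem_Icc_of_sum_reluRightDeriv_le
    (fun i => nnHad (X i) (φ j))
    (fun i => ℓ' (-(Y i) * nnOut φ θstar.1 θstar.2 (X i)) * Y i * θstar.1 j) (lam j) (θstar.2 j)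
    hdir
  refine ⟨μ, hμ, hsubgrad.trans (Finset.sum_congr rfl fun i _ => ?_)⟩
  rw [← mul_assoc, ← mul_assoc]

theorem local_min_first_order_condition
    {d m n : ℕ} (φ : ℕ → Vec d)
    (X : Fin n → Vec d) (Y : Fin n → ℝ)
    (hY : ∀ i, Y i = 1 ∨ Y i = -1)
    (ℓ ℓ' : ℝ → ℝ) (hderiv : ∀ z, HasDerivAt ℓ (ℓ' z) z)
    (lam : Fin m → ℝ) (hlam : ∀ j, 0 < lam j)
    (θstar : (Fin m → ℝ) × (Fin m → Vec d))
    (hmin : IsLocalMin (nnLoss ℓ φ X Y lam) θstar) :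
    ∀ j : Fin m, ∃ μ : Fin n → ℝ, (∀ i, μ i ∈ Set.Icc (0 : ℝ) 1) ∧
      (lam j • θstar.2 j
          - ∑ i, (ℓ' (-(Y i) * nnOut φ θstar.1 θstar.2 (X i)) * Y i * θstar.1 j *
              (if 0 < nnDot (θstar.2 j) (nnHad (X i) (φ (j : ℕ))) then (1 : ℝ) else 0)) •
            nnHad (X i) (φ (j : ℕ)))
        = ∑ i, ((if nnDot (θstar.2 j) (nnHad (X i) (φ (j : ℕ))) = 0 then μ i else 0) *
            ℓ' (-(Y i) * nnOut φ θstar.1 θstar.2 (X i)) * Y i * θstar.1 j) •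
            nnHad (X i) (φ (j : ℕ)) :=
  local_min_first_order_condition_general φ X Y ℓ ℓ' hderiv lam θstar hmin
end
end

section
/- Assume ℓ is differentiable with 1-Lipschitz derivative. If θ* is a local minimum of the regularized empirical loss L_n(·;λ) and there is an index j0 ∈ [m] with a_{j0}* = 0 and w_{j0}* = 0, then for every unit vector u ∈ ℝ^d (‖u‖₂ = 1), |Σ_{i=1}^n ℓ'(−y_i f(x_i;θ*)) y_i (u^⊤(x_i⊙φ_{j0}))_+| ≤ λ_{j0}. -/
open scoped BigOperators
open MeasureTheory

noncomputable section

open Set Function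

/-!
Switching on the inactive neuron along `a_j = c √τ`, `w_j = √τ • u` (`τ ≥ 0`) changes the
network output by `τ c (u⊤(x ⊙ φ_j))₊`, by positive homogeneity of the ReLU, and the regularizer
by `λ_j τ (c² + ‖u‖²) / 2`. Both are linear in `τ`, so the loss along this path is differentiable
in `τ` and has a one-sided minimum at `τ = 0`: its derivative there is nonnegative. Taking
`c = ±1` and `‖u‖ = 1` gives the two halves of the bound.
-/

theorem IsLocalMinOn.hasDerivWithinAt_Ici_nonneg {g : ℝ → ℝ} {a g' : ℝ}
    (hmin : IsLocalMinOn g (Ici a) a) (hg : HasDerivWithinAt g g' (Ici a) a) : 0 ≤ g' := by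
  have hone : (1 : ℝ) ∈ posTangentConeAt (Ici a) a :=
    mem_posTangentConeAt_of_segment_subset <| by
      rw [segment_eq_Icc (by linarith)]
      exact Icc_subset_Ici_self
  simpa using hmin.hasFDerivWithinAt_nonneg hg hone

theorem hasDerivAt_sum_comp_add_mul {ι : Type*} (s : Finset ι) {ℓ ℓ' : ℝ → ℝ}
    (hderiv : ∀ z, HasDerivAt ℓ (ℓ' z) z) (z v : ι → ℝ) :
    HasDerivAt (fun τ => ∑ i ∈ s, ℓ (z i + τ * v i)) (∑ i ∈ s, ℓ' (z i) * v i) 0 := by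
  refine HasDerivAt.fun_sum fun i _ => ?_
  have hline : HasDerivAt (fun τ : ℝ => z i + τ * v i) (v i) 0 := by
    simpa using ((hasDerivAt_id (0 : ℝ)).mul_const (v i)).const_add (z i)
  exact (hderiv (z i)).comp_of_eq 0 hline (by simp)

theorem Finset.sum_update₂_of_eq_zero {ι α β M : Type*} [Fintype ι] [DecidableEq ι]
    [AddCommMonoid M] (F : ι → α → β → M) {a : ι → α} {b : ι → β} {j : ι}
    (h : F j (a j) (b j) = 0) (c : α) (v : β) :
    ∑ k, F k (update a j c k) (update b j v k) = ∑ k, F k (a k) (b k) + F j c v := by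
  have hupd : (fun k => F k (update a j c k) (update b j v k)) =
      update (fun k => F k (a k) (b k)) j (F j c v) := by
    funext k
    rcases eq_or_ne k j with rfl | hk <;> simp [*]
  rw [hupd, Finset.sum_update_of_mem (Finset.mem_univ j), add_comm,
    Finset.sum_eq_sum_sdiff_singleton_add (Finset.mem_univ j), h, add_zero]

theorem nnRelu_mul_of_nonneg {t : ℝ} (ht : 0 ≤ t) (z : ℝ) : nnRelu (t * z) = t * nnRelu z := by
  simp only [nnRelu, mul_max_of_nonneg _ _ ht, mul_zero]

theorem nnDot_smul_left {d : ℕ} (t : ℝ) (u v : Vec d) : nnDot (t • u) v = t * nnDot u v := by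
  simp only [nnDot, Finset.mul_sum, PiLp.smul_apply, smul_eq_mul, mul_assoc]

theorem nnOut_update_of_eq_zero {d m : ℕ} (φ : ℕ → Vec d) {a : Fin m → ℝ} (w : Fin m → Vec d)
    {j : Fin m} (ha : a j = 0) (c : ℝ) (v x : Vec d) :
    nnOut φ (update a j c) (update w j v) x =
      nnOut φ a w x + c * nnRelu (nnDot v (nnHad x (φ j))) :=
  Finset.sum_update₂_of_eq_zero (fun (k : Fin m) a' w' => a' * nnRelu (nnDot w' (nnHad x (φ k))))
    (by simp [ha]) c v

theorem nnLoss_update_of_eq_zero {d m n : ℕ} (ℓ : ℝ → ℝ) (φ : ℕ → Vec d) (X : Fin n → Vec d)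
    (Y : Fin n → ℝ) (lam : Fin m → ℝ) {θ : (Fin m → ℝ) × (Fin m → Vec d)} {j : Fin m}
    (ha : θ.1 j = 0) (hw : θ.2 j = 0) (c : ℝ) (v : Vec d) :
    nnLoss ℓ φ X Y lam (update θ.1 j c, update θ.2 j v) =
      ∑ i, ℓ (-(Y i) * (nnOut φ θ.1 θ.2 (X i) + c * nnRelu (nnDot v (nnHad (X i) (φ j))))) +
        1 / 2 * (∑ k, lam k * (θ.1 k ^ 2 + ‖θ.2 k‖ ^ 2) + lam j * (c ^ 2 + ‖v‖ ^ 2)) := by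
  simp only [nnLoss, nnOut_update_of_eq_zero φ θ.2 ha,
    Finset.sum_update₂_of_eq_zero (fun k (a' : ℝ) (w' : Vec d) => lam k * (a' ^ 2 + ‖w'‖ ^ 2))
      (a := θ.1) (b := θ.2) (j := j) (by simp [ha, hw]) c v]

theorem nnLoss_update_sqrt_of_eq_zero {d m n : ℕ} (ℓ : ℝ → ℝ) (φ : ℕ → Vec d)
    (X : Fin n → Vec d) (Y : Fin n → ℝ) (lam : Fin m → ℝ) {θ : (Fin m → ℝ) × (Fin m → Vec d)}
    {j : Fin m} (ha : θ.1 j = 0) (hw : θ.2 j = 0) (c : ℝ) (u : Vec d) {τ : ℝ} (hτ : 0 ≤ τ) :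
    nnLoss ℓ φ X Y lam (update θ.1 j (c * √τ), update θ.2 j (√τ • u)) =
      ∑ i, ℓ (-(Y i) * nnOut φ θ.1 θ.2 (X i) +
          τ * (-(Y i) * c * nnRelu (nnDot u (nnHad (X i) (φ j))))) +
        1 / 2 * (∑ k, lam k * (θ.1 k ^ 2 + ‖θ.2 k‖ ^ 2) + τ * (lam j * (c ^ 2 + ‖u‖ ^ 2))) := by
  have hsqrt : √τ ^ 2 = τ := Real.sq_sqrt hτ
  have hout : ∀ x : Vec d, c * √τ * nnRelu (nnDot (√τ • u) x) = τ * c * nnRelu (nnDot u x) := by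
    intro x
    rw [nnDot_smul_left, nnRelu_mul_of_nonneg (Real.sqrt_nonneg τ)]
    linear_combination c * nnRelu (nnDot u x) * hsqrt
  have hnorm : (c * √τ) ^ 2 + ‖√τ • u‖ ^ 2 = τ * (c ^ 2 + ‖u‖ ^ 2) := by
    rw [norm_smul, Real.norm_of_nonneg (Real.sqrt_nonneg τ), mul_pow, mul_pow, hsqrt]
    ring
  rw [nnLoss_update_of_eq_zero ℓ φ X Y lam ha hw]
  simp only [hout, hnorm]
  congr 1
  · exact Finset.sum_congr rfl fun i _ => congrArg ℓ (by ring)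
  · ring

theorem IsLocalMin.inactive_neuron_first_order {d m n : ℕ} {ℓ ℓ' : ℝ → ℝ}
    (hderiv : ∀ z, HasDerivAt ℓ (ℓ' z) z) {φ : ℕ → Vec d} {X : Fin n → Vec d}
    {Y : Fin n → ℝ} {lam : Fin m → ℝ} {θ : (Fin m → ℝ) × (Fin m → Vec d)}
    (hmin : IsLocalMin (nnLoss ℓ φ X Y lam) θ) {j : Fin m} (ha : θ.1 j = 0) (hw : θ.2 j = 0)
    (c : ℝ) (u : Vec d) :
    c * ∑ i, ℓ' (-(Y i) * nnOut φ θ.1 θ.2 (X i)) * Y i * nnRelu (nnDot u (nnHad (X i) (φ j)))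
      ≤ lam j / 2 * (c ^ 2 + ‖u‖ ^ 2) := by
  set r : Fin n → ℝ := fun i => nnRelu (nnDot u (nnHad (X i) (φ j)))
  set z : Fin n → ℝ := fun i => -(Y i) * nnOut φ θ.1 θ.2 (X i)
  set R := ∑ k, lam k * (θ.1 k ^ 2 + ‖θ.2 k‖ ^ 2)
  set G : ℝ → ℝ := fun τ =>
    ∑ i, ℓ (z i + τ * (-(Y i) * c * r i)) + 1 / 2 * (R + τ * (lam j * (c ^ 2 + ‖u‖ ^ 2)))
  let γ : ℝ → (Fin m → ℝ) × (Fin m → Vec d) := fun τ =>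
    (update θ.1 j (c * √τ), update θ.2 j (√τ • u))
  have hγ0 : γ 0 = θ := by
    simp only [γ, Real.sqrt_zero, mul_zero, zero_smul]
    rw [← ha, ← hw, update_eq_self, update_eq_self]
  have hγcont : Continuous γ :=
    (continuous_const.update j (continuous_const.mul Real.continuous_sqrt)).prodMk
      (continuous_const.update j (Real.continuous_sqrt.smul continuous_const))
  have hGmin : IsLocalMinOn G (Ici 0) 0 := by
    have hcomp : IsLocalMinOn (nnLoss ℓ φ X Y lam ∘ γ) (Ici 0) 0 :=
      IsMinFilter.comp_tendsto (hγ0 ▸ hmin) ((hγcont.tendsto 0).mono_left nhdsWithin_le_nhds)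
    exact hcomp.congr (eventually_nhdsWithin_of_forall fun τ hτ =>
      nnLoss_update_sqrt_of_eq_zero ℓ φ X Y lam ha hw c u hτ) self_mem_Ici
  have hG : HasDerivAt G
      (∑ i, ℓ' (z i) * (-(Y i) * c * r i) + 1 / 2 * (lam j * (c ^ 2 + ‖u‖ ^ 2))) 0 := by
    refine (hasDerivAt_sum_comp_add_mul _ hderiv z _).add ?_
    have hline := (hasDerivAt_id (0 : ℝ)).mul_const (lam j * (c ^ 2 + ‖u‖ ^ 2))
    simpa using (hline.const_add R).const_mul (1 / 2 : ℝ)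
  have hsum : ∑ i, ℓ' (z i) * (-(Y i) * c * r i) = -(c * ∑ i, ℓ' (z i) * Y i * r i) := by
    rw [Finset.mul_sum, ← Finset.sum_neg_distrib]
    exact Finset.sum_congr rfl fun i _ => by ring
  have := hGmin.hasDerivWithinAt_Ici_nonneg hG.hasDerivWithinAt
  linarith

theorem inactive_neuron_flat_directions_general
    {d m n : ℕ} (φ : ℕ → Vec d)
    (X : Fin n → Vec d) (Y : Fin n → ℝ)
    (ℓ ℓ' : ℝ → ℝ) (hderiv : ∀ z, HasDerivAt ℓ (ℓ' z) z)
    (lam : Fin m → ℝ)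
    (θstar : (Fin m → ℝ) × (Fin m → Vec d))
    (hmin : IsLocalMin (nnLoss ℓ φ X Y lam) θstar)
    (j0 : Fin m) (hj0a : θstar.1 j0 = 0) (hj0w : θstar.2 j0 = 0) :
    ∀ u : Vec d, ‖u‖ = 1 →
      |∑ i, ℓ' (-(Y i) * nnOut φ θstar.1 θstar.2 (X i)) * Y i *
          nnRelu (nnDot u (nnHad (X i) (φ (j0 : ℕ))))| ≤ lam j0 := by
  intro u hu
  have hfirst := hmin.inactive_neuron_first_order hderiv hj0a hj0w (u := u)
  have hplus := hfirst 1
  have hminus := hfirst (-1)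
  rw [hu] at hplus hminus
  rw [abs_le]
  constructor <;> linarith

theorem inactive_neuron_flat_directions
    {d m n : ℕ} (φ : ℕ → Vec d)
    (X : Fin n → Vec d) (Y : Fin n → ℝ)
    (hY : ∀ i, Y i = 1 ∨ Y i = -1)
    (ℓ ℓ' : ℝ → ℝ) (hderiv : ∀ z, HasDerivAt ℓ (ℓ' z) z)
    (hlip : LipschitzWith 1 ℓ')
    (lam : Fin m → ℝ) (hlam : ∀ j, 0 < lam j)
    (θstar : (Fin m → ℝ) × (Fin m → Vec d))
    (hmin : IsLocalMin (nnLoss ℓ φ X Y lam) θstar)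
    (j0 : Fin m) (hj0a : θstar.1 j0 = 0) (hj0w : θstar.2 j0 = 0) :
    ∀ u : Vec d, ‖u‖ = 1 →
      |∑ i, ℓ' (-(Y i) * nnOut φ θstar.1 θstar.2 (X i)) * Y i *
          nnRelu (nnDot u (nnHad (X i) (φ (j0 : ℕ))))| ≤ lam j0 :=
  inactive_neuron_flat_directions_general φ X Y ℓ ℓ' hderiv lam θstar hmin j0 hj0a hj0w
end
end
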